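/- Fix an integer n ≥ 1 and reals ω₀ > 0, γ > 0. Let A be the 2(n+1) × 2(n+1) block matrix A = [[0, −Id_{n+1}], [ω₀² Id_{n+1} − Δ_N, 2γ Id_{n+1}]], and set μ_j = ω₀² + 4 sin²(π j/(2(n+1))) and ψ_j(x) = ((2 − δ_{0,j})/(n+1))^{1/2} cos(π j (2x+1)/(2(n+1))). Let λ ∈ ℂ satisfy λ² + 2γλ + μ_j ≠ 0 for every j = 0, …, n. Then λ·Id_{2(n+1)} + A is invertible and its inverse satisfies, for all x, y ∈ {0,…,n} (with indices of the blocks offset by n+1): [(λ + A)^{−1}]_{x+n+1, y+n+1} = Σ_{j=0}^n λ ψ_j(x) ψ_j(y)/(λ² + 2γλ + μ_j), [(λ + A)^{−1}]_{x, y+n+1} = Σ_{j=0}^n ψ_j(x) ψ_j(y)/(λ² + 2γλ + μ_j), and [(λ + A)^{−1}]_{x+n+1, y} = −Σ_{j=0}^n μ_j ψ_j(x) ψ_j(y)/(λ² + 2γλ + μ_j). -/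

import Mathlib

open Real Matrix

noncomputable section

/-- The matrix of the discrete Neumann Laplacian `Δ_N` on `{0,…,n}`. -/
def neumannLapMat (n : ℕ) : Matrix (Fin (n + 1)) (Fin (n + 1)) ℝ := fun x y =>
  (if (x : ℕ) = n then (if y = x then (1 : ℝ) else 0)
    else (if (y : ℕ) = (x : ℕ) + 1 then 1 else 0))
  + (if (x : ℕ) = 0 then (if y = x then 1 else 0)
    else (if (y : ℕ) + 1 = (x : ℕ) then 1 else 0))
  - 2 * (if y = x then 1 else 0)

/-- The drift matrix `A = [[0, −Id], [ω₀² Id − Δ_N, 2γ Id]]`. -/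
def driftA (n : ℕ) (ω₀ γ : ℝ) :
    Matrix (Fin (n + 1) ⊕ Fin (n + 1)) (Fin (n + 1) ⊕ Fin (n + 1)) ℝ :=
  Matrix.fromBlocks 0 (-1)
    (ω₀ ^ 2 • (1 : Matrix (Fin (n + 1)) (Fin (n + 1)) ℝ) - neumannLapMat n)
    ((2 * γ) • (1 : Matrix (Fin (n + 1)) (Fin (n + 1)) ℝ))

/-- The Neumann eigenvalues `μ_j = ω₀² + 4 sin²(πj/(2(n+1)))`. -/
def muN (n : ℕ) (ω₀ : ℝ) (j : ℕ) : ℝ :=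
  ω₀ ^ 2 + 4 * Real.sin (π * j / (2 * (n + 1))) ^ 2

/-- The Neumann eigenvectors `ψ_j(x) = ((2 − δ_{0,j})/(n+1))^{1/2} cos(πj(2x+1)/(2(n+1)))`. -/
def psiN (n j x : ℕ) : ℝ :=
  Real.sqrt ((2 - if j = 0 then 1 else 0) / (n + 1)) *
    Real.cos (π * j * (2 * x + 1) / (2 * (n + 1)))

/-!
The vectors `ψ_j` are sampled cosine modes `cos ((2x+1) θ_j)`, `θ_j = πj/(2(n+1))`. The same
formula on all of `ℤ` is symmetric about `-1/2` and `n + 1/2`, which is exactly the Neumann boundary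
condition, so the identity `cos (A + 2θ) + cos (A - 2θ) = (2 - 4 sin² θ) cos A` makes them
eigenvectors of `ω₀² - Δ_N` with eigenvalues `μ_j`. A telescoping (Dirichlet kernel) sum shows
that they are complete: `∑_j ψ_j ψ_jᵀ = 1`. Hence `S = ∑_j (λ² + 2γλ + μ_j)⁻¹ ψ_j ψ_jᵀ` inverts
`λ(λ + 2γ) + ω₀² - Δ_N`, and `[[(λ + 2γ) S, S], [-(ω₀² - Δ_N) S, λ S]]` is a right inverse,
hence the inverse, of `λ + A`.
-/

open Finset

lemma sum_range_eps_cos_mul_sin_half (n : ℕ) (α : ℝ) :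
    (∑ j ∈ range (n + 1), (2 - if j = 0 then (1 : ℝ) else 0) * cos (j * α)) * sin (α / 2)
      = sin ((n + 1 / 2) * α) := by
  induction n with
  | zero => norm_num; ring_nf
  | succ n ih =>
    have h : sin ((n + 1 + 1 / 2) * α) - sin ((n + 1 / 2) * α)
        = 2 * cos ((n + 1) * α) * sin (α / 2) := by
      rw [sin_sub_sin]; ring_nf
    rw [sum_range_succ, add_mul, ih, if_neg n.succ_ne_zero]
    push_cast
    linarith

lemma sum_range_eps (n : ℕ) :
    ∑ j ∈ range (n + 1), (2 - if j = 0 then (1 : ℝ) else 0) = 2 * n + 1 := by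
  induction n with
  | zero => norm_num
  | succ n ih => rw [sum_range_succ, ih, if_neg n.succ_ne_zero]; push_cast; ring

lemma sum_range_eps_cos_int_mul (n : ℕ) (m : ℤ) (hm0 : m ≠ 0) (hm : |m| < 2 * (n + 1)) :
    ∑ j ∈ range (n + 1), (2 - if j = 0 then (1 : ℝ) else 0) * cos (π * j * m / (n + 1))
      = -cos (m * π) := by
  set α : ℝ := π * m / (n + 1)
  have hsin : sin (α / 2) ≠ 0 := by
    set t : ℝ := m / (2 * (n + 1))
    have ht : |t| < 1 := by
      rw [abs_div, abs_of_pos (by positivity : (0 : ℝ) < 2 * (n + 1)), div_lt_one (by positivity)]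
      exact_mod_cast hm
    have e : α / 2 = π * t := by simp only [α, t]; field_simp
    rw [abs_lt] at ht
    rw [e, Ne, sin_eq_zero_iff_of_lt_of_lt (by nlinarith [pi_pos]) (by nlinarith [pi_pos]),
      mul_eq_zero, not_or]
    exact ⟨pi_ne_zero, div_ne_zero (by exact_mod_cast hm0) (by positivity)⟩
  have h := sum_range_eps_cos_mul_sin_half n α
  have e : (n + 1 / 2) * α = m * π - α / 2 := by simp only [α]; field_simp; ring
  rw [e, sin_sub, sin_int_mul_pi, zero_mul, zero_sub, ← neg_mul] at h
  refine mul_right_cancel₀ hsin (Eq.trans ?_ h)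
  simp only [α]; congr 1; refine sum_congr rfl fun j _ => ?_; ring_nf

lemma psiN_mul_psiN (n j x y : ℕ) :
    psiN n j x * psiN n j y = (2 - if j = 0 then (1 : ℝ) else 0) / (2 * (n + 1)) *
      (cos (π * j * ((x : ℝ) - y) / (n + 1)) + cos (π * j * ((x : ℝ) + y + 1) / (n + 1))) := by
  set a := π * j * (2 * x + 1) / (2 * (n + 1))
  set b := π * j * (2 * y + 1) / (2 * (n + 1))
  have hsub : π * j * ((x : ℝ) - y) / (n + 1) = a - b := by simp only [a, b]; field_simp; ring
  have hadd : π * j * ((x : ℝ) + y + 1) / (n + 1) = a + b := by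
    simp only [a, b]; field_simp; ring
  have hε : (0 : ℝ) ≤ (2 - if j = 0 then 1 else 0) / (n + 1) := by
    split_ifs <;> positivity
  rw [hsub, hadd, cos_sub, cos_add]
  calc psiN n j x * psiN n j y
      = √((2 - if j = 0 then 1 else 0) / (n + 1)) ^ 2 * (cos a * cos b) := by
        simp only [psiN, a, b]; ring
    _ = _ := by rw [sq_sqrt hε]; field_simp; ring

lemma cos_add_odd_mul_pi (x : ℝ) (k : ℕ) : cos (x + (2 * k + 1) * π) = -cos x := by
  rw [show x + (2 * k + 1) * π = x + π + k * (2 * π) by ring, cos_add_nat_mul_two_pi, cos_add_pi]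

lemma sum_range_psiN_mul_psiN (n x y : ℕ) (hx : x ≤ n) (hy : y ≤ n) :
    ∑ j ∈ range (n + 1), psiN n j x * psiN n j y = if x = y then 1 else 0 := by
  have hsplit : ∑ j ∈ range (n + 1), psiN n j x * psiN n j y =
      (∑ j ∈ range (n + 1),
            (2 - if j = 0 then (1 : ℝ) else 0) * cos (π * j * ((x : ℝ) - y) / (n + 1))
        + ∑ j ∈ range (n + 1),
            (2 - if j = 0 then (1 : ℝ) else 0) * cos (π * j * ((x : ℝ) + y + 1) / (n + 1)))
        / (2 * (n + 1)) := by
    rw [← sum_add_distrib, sum_div]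
    exact sum_congr rfl fun j _ => by rw [psiN_mul_psiN]; ring
  have hodd := sum_range_eps_cos_int_mul n (x + y + 1 : ℕ) (by omega)
    (by rw [abs_of_nonneg (by positivity)]; omega)
  push_cast at hodd
  rw [hsplit, hodd, show ((x : ℝ) + y + 1) * π = (x - y) * π + (2 * y + 1) * π by ring,
    cos_add_odd_mul_pi]
  split_ifs with hxy
  · subst hxy
    simp only [sub_self, mul_zero, zero_div, cos_zero, mul_one, sum_range_eps, zero_mul]
    field_simp
    ring
  · have hdiff := sum_range_eps_cos_int_mul n ((x : ℤ) - y) (by omega) (by rw [abs_lt]; omega)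
    push_cast at hdiff
    rw [hdiff]
    ring

lemma neumannLapMat_mulVec (n : ℕ) (f : ℤ → ℝ) (h₀ : f (-1) = f 0) (hₙ : f (n + 1) = f n)
    (x : Fin (n + 1)) :
    (neumannLapMat n *ᵥ fun y => f y) x = f (x + 1) + f (x - 1) - 2 * f x := by
  have eval : ∀ k < n + 1, ∑ y : Fin (n + 1), (if (y : ℕ) = k then f y else 0) = f k :=
    fun k hk => by
    rw [Fin.sum_univ_eq_sum_range (fun y => if y = k then f y else 0), sum_ite_eq']
    simp [hk]
  have hx := x.is_lt
  simp only [mulVec, dotProduct, neumannLapMat, sub_mul, add_mul, sum_add_distrib,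
    sum_sub_distrib, ite_mul, one_mul, zero_mul, Fin.ext_iff]
  congr 2
  · split_ifs with hxn
    · rw [eval x hx, hxn, hₙ]
    · rw [eval (x + 1) (by omega)]; push_cast; rfl
  · split_ifs with hx0
    · rw [eval x hx, hx0, Nat.cast_zero, zero_sub, h₀]
    · simp_rw [show ∀ y : ℕ, y + 1 = (x : ℕ) ↔ y = x - 1 by omega]
      rw [eval (x - 1) (by omega), Nat.cast_sub (by omega), Nat.cast_one]
  · simp_rw [mul_assoc, ite_mul, one_mul, zero_mul]
    rw [← mul_sum, eval x hx]

lemma cos_add_two_mul_add_cos_sub_two_mul (A θ : ℝ) :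
    cos (A + 2 * θ) + cos (A - 2 * θ) = (2 - 4 * sin θ ^ 2) * cos A := by
  rw [cos_add, cos_sub, cos_two_mul]
  linear_combination (4 * cos A) * sin_sq_add_cos_sq θ

lemma neumannLapMat_mulVec_cos (n j : ℕ) :
    neumannLapMat n *ᵥ (fun x : Fin (n + 1) => cos (π * j * (2 * x + 1) / (2 * (n + 1))))
      = (-(4 * sin (π * j / (2 * (n + 1))) ^ 2)) •
          fun x : Fin (n + 1) => cos (π * j * (2 * x + 1) / (2 * (n + 1))) := by
  set θ := π * j / (2 * (n + 1))
  set f : ℤ → ℝ := fun m => cos ((2 * m + 1) * θ)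
  have hf : (fun x : Fin (n + 1) => cos (π * j * (2 * x + 1) / (2 * (n + 1))))
      = fun x : Fin (n + 1) => f (x : ℕ) := by
    ext x; simp only [f, θ, Int.cast_natCast]; ring_nf
  have h₀ : f (-1) = f 0 := by simp only [f]; push_cast; rw [← cos_neg]; ring_nf
  have hₙ : f (n + 1) = f n := by
    have hjπ : (2 * ((n : ℤ) : ℝ) + 1) * θ = j * π - θ := by
      simp only [θ, Int.cast_natCast]; field_simp; ring
    simp only [f]
    rw [show (2 * (((n + 1 : ℤ)) : ℝ) + 1) * θ = j * π + θ by push_cast; linear_combination hjπ,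
      hjπ, cos_add, cos_sub, sin_nat_mul_pi]
    ring
  rw [hf]
  ext x
  rw [neumannLapMat_mulVec n f h₀ hₙ, Pi.smul_apply, smul_eq_mul]
  simp only [f]
  push_cast
  rw [show (2 * ((x : ℝ) + 1) + 1) * θ = (2 * x + 1) * θ + 2 * θ by ring,
    show (2 * ((x : ℝ) - 1) + 1) * θ = (2 * x + 1) * θ - 2 * θ by ring,
    cos_add_two_mul_add_cos_sub_two_mul]
  ring

lemma neumannLapMat_mulVec_psiN (n j : ℕ) :
    neumannLapMat n *ᵥ (fun x : Fin (n + 1) => psiN n j x)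
      = (-(4 * sin (π * j / (2 * (n + 1))) ^ 2)) • fun x : Fin (n + 1) => psiN n j x := by
  have h : (fun x : Fin (n + 1) => psiN n j x) = √((2 - if j = 0 then 1 else 0) / (n + 1)) •
      fun x : Fin (n + 1) => cos (π * j * (2 * x + 1) / (2 * (n + 1))) := rfl
  rw [h, mulVec_smul, neumannLapMat_mulVec_cos, smul_comm]

lemma mulVec_psiN (n : ℕ) (ω₀ : ℝ) (j : ℕ) :
    (ω₀ ^ 2 • (1 : Matrix (Fin (n + 1)) (Fin (n + 1)) ℝ) - neumannLapMat n) *ᵥ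
        (fun x : Fin (n + 1) => psiN n j x) = muN n ω₀ j • fun x : Fin (n + 1) => psiN n j x := by
  rw [sub_mulVec, smul_mulVec, one_mulVec, neumannLapMat_mulVec_psiN, muN, add_smul, neg_smul,
    sub_neg_eq_add]

section Spectral

variable {m ι K : Type*} [Fintype m] [Fintype ι] [Field K]

lemma mul_sum_smul_vecMulVec (N : Matrix m m K) (ψ φ : ι → m → K) (μ : ι → K)
    (hN : ∀ i, N *ᵥ ψ i = μ i • ψ i) (f : ι → K) :
    N * ∑ i, f i • vecMulVec (ψ i) (φ i) = ∑ i, (f i * μ i) • vecMulVec (ψ i) (φ i) := by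
  simp only [mul_sum, Matrix.mul_smul, mul_vecMulVec, hN, smul_vecMulVec, smul_smul]

variable [DecidableEq m]

lemma smul_add_mul_sum_inv_smul_vecMulVec (N : Matrix m m K) (ψ φ : ι → m → K) (μ : ι → K)
    (hN : ∀ i, N *ᵥ ψ i = μ i • ψ i) (hψφ : ∑ i, vecMulVec (ψ i) (φ i) = 1)
    (c : K) (hc : ∀ i, c + μ i ≠ 0) :
    c • ∑ i, (c + μ i)⁻¹ • vecMulVec (ψ i) (φ i)
      + N * ∑ i, (c + μ i)⁻¹ • vecMulVec (ψ i) (φ i) = 1 := by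
  rw [mul_sum_smul_vecMulVec N ψ φ μ hN, smul_sum, ← sum_add_distrib, ← hψφ]
  refine sum_congr rfl fun i _ => ?_
  rw [smul_smul, ← add_smul, mul_comm c, ← mul_add, inv_mul_cancel₀ (hc i), one_smul]

end Spectral

section Blocks

variable {m R : Type*} [Fintype m] [DecidableEq m] [CommRing R]

lemma fromBlocks_mul_fromBlocks_eq_one (a b : R) (N S : Matrix m m R)
    (hS : (a * b) • S + N * S = 1) :
    fromBlocks (a • 1) (-1) N (b • 1) * fromBlocks (b • S) S (-(N * S)) (a • S) = 1 := by
  rw [fromBlocks_multiply, ← fromBlocks_one]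
  congr 1
  · rw [smul_mul, one_mul, smul_smul, neg_one_mul, neg_neg, hS]
  · rw [smul_mul, one_mul, neg_one_mul, add_neg_cancel]
  · rw [Matrix.mul_smul, smul_mul, one_mul, smul_neg, add_neg_cancel]
  · rw [smul_mul, one_mul, smul_smul, mul_comm b, add_comm, hS]

end Blocks

lemma smul_one_add_map_driftA (n : ℕ) (ω₀ γ : ℝ) (lam : ℂ) :
    lam • 1 + (driftA n ω₀ γ).map Complex.ofReal
      = fromBlocks (lam • 1) (-1) ((ω₀ ^ 2 • 1 - neumannLapMat n).map Complex.ofReal)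
          ((lam + 2 * γ) • 1) := by
  ext (i | i) (k | k) <;> by_cases h : i = k <;> simp [driftA, one_apply, h]

lemma sum_vecMulVec_psiN (n : ℕ) :
    ∑ j : Fin (n + 1), vecMulVec (fun x : Fin (n + 1) => (psiN n j x : ℂ))
      (fun x : Fin (n + 1) => (psiN n j x : ℂ)) = 1 := by
  ext x y
  have h := sum_range_psiN_mul_psiN n x y (by omega) (by omega)
  rw [← Fin.sum_univ_eq_sum_range (fun j => psiN n j x * psiN n j y)] at h
  simp only [Fin.val_inj] at h
  rw [Matrix.sum_apply, one_apply]
  simp only [vecMulVec_apply, ← Complex.ofReal_mul, ← Complex.ofReal_sum, h]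
  split_ifs <;> simp

lemma map_mulVec_psiN (n : ℕ) (ω₀ : ℝ) (j : ℕ) :
    (ω₀ ^ 2 • 1 - neumannLapMat n).map Complex.ofReal *ᵥ
        (fun x : Fin (n + 1) => (psiN n j x : ℂ))
      = (muN n ω₀ j : ℂ) • fun x : Fin (n + 1) => (psiN n j x : ℂ) := by
  ext x
  have h := RingHom.map_mulVec Complex.ofRealHom
    (ω₀ ^ 2 • (1 : Matrix (Fin (n + 1)) (Fin (n + 1)) ℝ) - neumannLapMat n)
    (fun x => psiN n j x) x
  rw [mulVec_psiN] at h
  refine h.symm.trans ?_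
  simp

theorem driftA_resolvent_entries_general (n : ℕ) (ω₀ γ : ℝ)
    (lam : ℂ)
    (hlam : ∀ j : Fin (n + 1), lam ^ 2 + 2 * (γ : ℂ) * lam + (muN n ω₀ (j : ℕ) : ℂ) ≠ 0) :
    IsUnit (lam • (1 : Matrix (Fin (n + 1) ⊕ Fin (n + 1)) (Fin (n + 1) ⊕ Fin (n + 1)) ℂ)
        + (driftA n ω₀ γ).map Complex.ofReal)
    ∧ ∀ x y : Fin (n + 1),
      ((lam • (1 : Matrix (Fin (n + 1) ⊕ Fin (n + 1)) (Fin (n + 1) ⊕ Fin (n + 1)) ℂ)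
          + (driftA n ω₀ γ).map Complex.ofReal)⁻¹ (Sum.inr x) (Sum.inr y)
        = ∑ j : Fin (n + 1),
            lam * (psiN n j x : ℂ) * (psiN n j y : ℂ) /
              (lam ^ 2 + 2 * (γ : ℂ) * lam + (muN n ω₀ (j : ℕ) : ℂ)))
      ∧ ((lam • (1 : Matrix (Fin (n + 1) ⊕ Fin (n + 1)) (Fin (n + 1) ⊕ Fin (n + 1)) ℂ)
          + (driftA n ω₀ γ).map Complex.ofReal)⁻¹ (Sum.inl x) (Sum.inr y)
        = ∑ j : Fin (n + 1),
            (psiN n j x : ℂ) * (psiN n j y : ℂ) /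
              (lam ^ 2 + 2 * (γ : ℂ) * lam + (muN n ω₀ (j : ℕ) : ℂ)))
      ∧ ((lam • (1 : Matrix (Fin (n + 1) ⊕ Fin (n + 1)) (Fin (n + 1) ⊕ Fin (n + 1)) ℂ)
          + (driftA n ω₀ γ).map Complex.ofReal)⁻¹ (Sum.inr x) (Sum.inl y)
        = -∑ j : Fin (n + 1),
            (muN n ω₀ (j : ℕ) : ℂ) * (psiN n j x : ℂ) * (psiN n j y : ℂ) /
              (lam ^ 2 + 2 * (γ : ℂ) * lam + (muN n ω₀ (j : ℕ) : ℂ))) := by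
  set N := (ω₀ ^ 2 • (1 : Matrix (Fin (n + 1)) (Fin (n + 1)) ℝ) - neumannLapMat n).map
    Complex.ofReal
  set ψ : Fin (n + 1) → Fin (n + 1) → ℂ := fun j x => (psiN n j x : ℂ)
  set μ : Fin (n + 1) → ℂ := fun j => (muN n ω₀ j : ℂ)
  have hN : ∀ j, N *ᵥ ψ j = μ j • ψ j := fun j => map_mulVec_psiN n ω₀ j
  set S := ∑ j, (lam ^ 2 + 2 * γ * lam + μ j)⁻¹ • vecMulVec (ψ j) (ψ j)
  have hS : (lam * (lam + 2 * γ)) • S + N * S = 1 := by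
    rw [show lam * (lam + 2 * γ) = lam ^ 2 + 2 * γ * lam by ring]
    exact smul_add_mul_sum_inv_smul_vecMulVec N ψ ψ μ hN (sum_vecMulVec_psiN n) _ hlam
  have hB := fromBlocks_mul_fromBlocks_eq_one lam (lam + 2 * γ) N S hS
  rw [← smul_one_add_map_driftA] at hB
  refine ⟨IsUnit.of_mul_eq_one _ hB, fun x y => ?_⟩
  simp only [inv_eq_right_inv hB, fromBlocks_apply₂₂, fromBlocks_apply₁₂, fromBlocks_apply₂₁,
    S, mul_sum_smul_vecMulVec N ψ ψ μ hN, Matrix.neg_apply, Matrix.smul_apply, Matrix.sum_apply,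
    vecMulVec_apply, smul_eq_mul, mul_sum, ψ, μ]
  refine ⟨?_, ?_, congrArg Neg.neg ?_⟩ <;> exact sum_congr rfl fun j _ => by ring

/-- Explicit block entries of the resolvent `(λ + A)⁻¹` in terms of the
Neumann eigenbasis, for `λ` avoiding the characteristic roots `λ² + 2γλ + μ_j = 0`. -/
theorem driftA_resolvent_entries (n : ℕ) (hn : 1 ≤ n) (ω₀ γ : ℝ) (hω : 0 < ω₀) (hγ : 0 < γ)
    (lam : ℂ)
    (hlam : ∀ j : Fin (n + 1), lam ^ 2 + 2 * (γ : ℂ) * lam + (muN n ω₀ (j : ℕ) : ℂ) ≠ 0) :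
    IsUnit (lam • (1 : Matrix (Fin (n + 1) ⊕ Fin (n + 1)) (Fin (n + 1) ⊕ Fin (n + 1)) ℂ)
        + (driftA n ω₀ γ).map Complex.ofReal)
    ∧ ∀ x y : Fin (n + 1),
      ((lam • (1 : Matrix (Fin (n + 1) ⊕ Fin (n + 1)) (Fin (n + 1) ⊕ Fin (n + 1)) ℂ)
          + (driftA n ω₀ γ).map Complex.ofReal)⁻¹ (Sum.inr x) (Sum.inr y)
        = ∑ j : Fin (n + 1),
            lam * (psiN n j x : ℂ) * (psiN n j y : ℂ) /
              (lam ^ 2 + 2 * (γ : ℂ) * lam + (muN n ω₀ (j : ℕ) : ℂ)))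
      ∧ ((lam • (1 : Matrix (Fin (n + 1) ⊕ Fin (n + 1)) (Fin (n + 1) ⊕ Fin (n + 1)) ℂ)
          + (driftA n ω₀ γ).map Complex.ofReal)⁻¹ (Sum.inl x) (Sum.inr y)
        = ∑ j : Fin (n + 1),
            (psiN n j x : ℂ) * (psiN n j y : ℂ) /
              (lam ^ 2 + 2 * (γ : ℂ) * lam + (muN n ω₀ (j : ℕ) : ℂ)))
      ∧ ((lam • (1 : Matrix (Fin (n + 1) ⊕ Fin (n + 1)) (Fin (n + 1) ⊕ Fin (n + 1)) ℂ)
          + (driftA n ω₀ γ).map Complex.ofReal)⁻¹ (Sum.inr x) (Sum.inl y)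
        = -∑ j : Fin (n + 1),
            (muN n ω₀ (j : ℕ) : ℂ) * (psiN n j x : ℂ) * (psiN n j y : ℂ) /
              (lam ^ 2 + 2 * (γ : ℂ) * lam + (muN n ω₀ (j : ℕ) : ℂ))) :=
  driftA_resolvent_entries_general n ω₀ γ lam hlam

end
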